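/- arXiv:2209.06251 — 4 statements merged into one kernel-verified Lean document; each statement's English description precedes it below -/
import Mathlib

section
/- Let A_1, …, A_L ∈ ℝ^{n×n}, B ∈ ℝ^{n×m}, K_1, …, K_{N_v} ∈ ℝ^{m×n}, let Ω = {ω_1, …, ω_{N_v}} ⊂ ℝ^L with Θ = conv(Ω), and let Y ∈ ℝ^{n×n} be symmetric positive definite. Define A(θ) = Σ_{ℓ=1}^L θ_ℓ A_ℓ and A_v = Σ_{ℓ=1}^L (ω_v)_ℓ A_ℓ. Then the following are equivalent: (i) for every θ ∈ Θ and every c ∈ ℝ^{N_v} with c_v ≥ 0, Σ_v c_v = 1, and Σ_v c_v ω_v = θ, the matrix −(Y(A(θ) + B K(θ)) + (A(θ) + B K(θ))ᵀ Y) is positive definite, where K(θ) = Σ_v c_v K_v; (ii) for every v = 1, …, N_v, the matrix −(Y(A_v + B K_v) + (A_v + B K_v)ᵀ Y) is positive definite. -/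
/-!
Both the closed-loop matrix `A(θ) + B K(θ)` and the Lyapunov operator `M ↦ -(Y M + Mᵀ Y)` are
linear, so with `θ = ∑ c_v ω_v` the matrix in (i) is the convex combination `∑ c_v F_v` of the
vertex matrices `F_v` of (ii), and positive definite matrices form a convex set. Conversely,
`F_v` is the case `c = e_v`.
-/

open Matrix

open scoped ComplexOrder in
theorem Matrix.convex_setOf_posDef {𝕜 n : Type*} [RCLike 𝕜] :
    Convex ℝ {M : Matrix n n 𝕜 | M.PosDef} :=
  convex_iff_forall_pos.2 fun _ hM _ hN _ _ ha hb _ => (hM.smul ha).add (hN.smul hb)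

def negLyapunovMap {R n : Type*} [CommRing R] [Fintype n] (Y : Matrix n n R) :
    Matrix n n R →ₗ[R] Matrix n n R where
  toFun M := -(Y * M + Mᵀ * Y)
  map_add' M N := by simp only [Matrix.mul_add, transpose_add, Matrix.add_mul]; abel
  map_smul' c M := by simp [Matrix.mul_smul, Matrix.smul_mul, smul_add]

theorem sum_smul_add_mul_sum_smul {R ι κ n m : Type*} [CommRing R] [Fintype ι] [Fintype κ]
    [Fintype m] (A : κ → Matrix n n R) (B : Matrix n m R) (K : ι → Matrix m n R)
    (ω : ι → κ → R) (c : ι → R) :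
    (∑ ℓ, (∑ v, c v • ω v) ℓ • A ℓ) + B * (∑ v, c v • K v) =
      ∑ v, c v • ((∑ ℓ, ω v ℓ • A ℓ) + B * K v) := by
  simp only [← Fintype.linearCombination_apply R A, map_sum, map_smul, Matrix.mul_sum,
    Matrix.mul_smul, smul_add, Finset.sum_add_distrib]

theorem stmt1_general {n m L Nv : ℕ}
    (A : Fin L → Matrix (Fin n) (Fin n) ℝ) (B : Matrix (Fin n) (Fin m) ℝ)
    (K : Fin Nv → Matrix (Fin m) (Fin n) ℝ)
    (ω : Fin Nv → (Fin L → ℝ))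
    (Y : Matrix (Fin n) (Fin n) ℝ) :
    (∀ θ ∈ convexHull ℝ (Set.range ω), ∀ c : Fin Nv → ℝ,
        (∀ v, 0 ≤ c v) → (∑ v, c v) = 1 → (∑ v, c v • ω v) = θ →
        (-(Y * ((∑ ℓ, θ ℓ • A ℓ) + B * (∑ v, c v • K v)) +
            ((∑ ℓ, θ ℓ • A ℓ) + B * (∑ v, c v • K v))ᵀ * Y)).PosDef) ↔
      (∀ v : Fin Nv,
        (-(Y * ((∑ ℓ, ω v ℓ • A ℓ) + B * K v) +
            ((∑ ℓ, ω v ℓ • A ℓ) + B * K v)ᵀ * Y)).PosDef) := by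
  constructor
  · intro hall v
    have hsingle : (0 : Fin Nv → ℝ) ≤ Pi.single v 1 := Pi.single_nonneg.2 zero_le_one
    simpa [Pi.single_apply, ite_smul] using
      hall (ω v) (subset_convexHull ℝ _ (Set.mem_range_self v)) (Pi.single v 1) hsingle
        (by simp) (by simp [Pi.single_apply, ite_smul])
  · rintro hvert θ - c hc hs rfl
    have hconv := (convex_setOf_posDef (𝕜 := ℝ)).sum_mem (fun v _ => hc v) hs fun v _ => hvert v
    change (negLyapunovMap Y _).PosDef
    rw [sum_smul_add_mul_sum_smul, map_sum]
    simp only [map_smul]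
    exact hconv

/-- continuous-time version of Lemma 2 of the paper. The gain-scheduled
quadratic stabilization condition `-(Y(A(θ)+BK(θ)) + (A(θ)+BK(θ))ᵀY) ≻ 0` holds for all
`θ` in the convex hull of the vertices `ω v` and all interpolating coefficients `c` iff
it holds at every vertex. -/
theorem stmt1 {n m L Nv : ℕ}
    (A : Fin L → Matrix (Fin n) (Fin n) ℝ) (B : Matrix (Fin n) (Fin m) ℝ)
    (K : Fin Nv → Matrix (Fin m) (Fin n) ℝ)
    (ω : Fin Nv → (Fin L → ℝ))
    (Y : Matrix (Fin n) (Fin n) ℝ) (hYsymm : Y.IsSymm) (hY : Y.PosDef) :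
    (∀ θ ∈ convexHull ℝ (Set.range ω), ∀ c : Fin Nv → ℝ,
        (∀ v, 0 ≤ c v) → (∑ v, c v) = 1 → (∑ v, c v • ω v) = θ →
        (-(Y * ((∑ ℓ, θ ℓ • A ℓ) + B * (∑ v, c v • K v)) +
            ((∑ ℓ, θ ℓ • A ℓ) + B * (∑ v, c v • K v))ᵀ * Y)).PosDef) ↔
      (∀ v : Fin Nv,
        (-(Y * ((∑ ℓ, ω v ℓ • A ℓ) + B * K v) +
            ((∑ ℓ, ω v ℓ • A ℓ) + B * K v)ᵀ * Y)).PosDef) :=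
  stmt1_general A B K ω Y
end

section
/- Let Φ be a symmetric (n+T)×(n+T) real matrix partitioned into blocks Φ₁₁ ∈ ℝ^{n×n} (symmetric), Φ₁₂ ∈ ℝ^{n×T}, Φ₂₂ ∈ ℝ^{T×T} (symmetric) with −Φ₂₂ positive definite. Suppose Z ∈ ℝ^{n×T} satisfies Z ∈ QBP(Φ), i.e., Φ₁₁ + Z Φ₁₂ᵀ + Φ₁₂ Zᵀ + Z Φ₂₂ Zᵀ is positive semidefinite. Then (Z + Φ₁₂Φ₂₂⁻¹)(−Φ₂₂)(Z + Φ₁₂Φ₂₂⁻¹)ᵀ ⪯ Φ₁₁ − Φ₁₂Φ₂₂⁻¹Φ₁₂ᵀ (in the positive-semidefinite order), and consequently λ_min(−Φ₂₂) · ‖Z + Φ₁₂Φ₂₂⁻¹‖_F² ≤ n · λ_max(Φ₁₁ − Φ₁₂Φ₂₂⁻¹Φ₁₂ᵀ), where ‖·‖_F is the Frobenius norm and λ_min, λ_max denote the smallest and largest eigenvalues of a symmetric matrix. In particular the set QBP(Φ) is bounded. -/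
/-!
Completing the square in `Z` turns the QBP matrix into
`Φ₁₁ - Φ₁₂Φ₂₂⁻¹Φ₁₂ᵀ - (Z + Φ₁₂Φ₂₂⁻¹)(-Φ₂₂)(Z + Φ₁₂Φ₂₂⁻¹)ᵀ`, which gives the Loewner bound.
Taking traces, `-Φ₂₂ ⪰ λ_min(-Φ₂₂) • 1` bounds the trace of the subtracted term from below by
`λ_min(-Φ₂₂)‖Z + Φ₁₂Φ₂₂⁻¹‖_F²`, while the trace of the Schur complement is at most `n` times
its largest eigenvalue.
-/

open Matrix

namespace Matrix

variable {m n R : Type*} [Fintype n]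

theorem trace_mul_transpose_self [Fintype m] [Semiring R] (W : Matrix m n R) :
    (W * Wᵀ).trace = ∑ i, ∑ j, W i j ^ 2 := by
  simp only [trace, diag, mul_apply, transpose_apply, sq]

theorem schur_sub_square_eq_quadratic [CommRing R] [DecidableEq n] (A : Matrix m m R)
    (B Z : Matrix m n R) {C : Matrix n n R} (hC : C.IsSymm) (hCu : IsUnit C) :
    A - B * C⁻¹ * Bᵀ - (Z + B * C⁻¹) * (-C) * (Z + B * C⁻¹)ᵀ
      = A + Z * Bᵀ + B * Zᵀ + Z * C * Zᵀ := by
  have hdet := (isUnit_iff_isUnit_det C).mp hCu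
  rw [transpose_add, transpose_mul, transpose_nonsing_inv, hC.eq]
  simp only [Matrix.add_mul, Matrix.mul_add, Matrix.mul_neg, Matrix.neg_mul, Matrix.mul_assoc,
    fun X : Matrix n m R => mul_nonsing_inv_cancel_left C X hdet,
    fun X : Matrix n m R => nonsing_inv_mul_cancel_left C X hdet]
  abel

variable [DecidableEq n] {A : Matrix n n ℝ}

open scoped MatrixOrder in
theorem IsHermitian.posSemidef_sub_smul_one (hA : A.IsHermitian) {c : ℝ}
    (hc : ∀ i, c ≤ hA.eigenvalues i) : (A - c • 1).PosSemidef := by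
  have hle : algebraMap ℝ _ c ≤ A := algebraMap_le_of_le_spectrum fun x hx => by
    rw [hA.spectrum_real_eq_range_eigenvalues] at hx
    obtain ⟨i, rfl⟩ := hx
    exact hc i
  rwa [Matrix.le_iff, Algebra.algebraMap_eq_smul_one] at hle

theorem IsHermitian.iInf_eigenvalues_mul_trace_le [Fintype m] (hA : A.IsHermitian)
    (W : Matrix m n ℝ) : (⨅ i, hA.eigenvalues i) * (W * Wᵀ).trace ≤ (W * A * Wᵀ).trace := by
  set c := ⨅ i, hA.eigenvalues i
  have hA' : (A - c • 1).PosSemidef :=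
    hA.posSemidef_sub_smul_one fun i => ciInf_le (Set.finite_range _).bddBelow i
  have h := (hA'.mul_mul_conjTranspose_same W).trace_nonneg
  rw [conjTranspose_eq_transpose_of_trivial, Matrix.mul_sub, Matrix.sub_mul, trace_sub,
    Matrix.mul_smul, Matrix.smul_mul, trace_smul, Matrix.mul_one, smul_eq_mul] at h
  linarith

theorem IsHermitian.trace_le_card_mul_iSup_eigenvalues (hA : A.IsHermitian) :
    A.trace ≤ Fintype.card n * ⨆ i, hA.eigenvalues i := by
  calc A.trace = ∑ i, hA.eigenvalues i := hA.trace_eq_sum_eigenvalues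
    _ ≤ ∑ _i : n, ⨆ i, hA.eigenvalues i :=
      Finset.sum_le_sum fun i _ => le_ciSup (Set.finite_range _).bddAbove i
    _ = Fintype.card n * ⨆ i, hA.eigenvalues i := by simp

end Matrix

theorem stmt4_general {n T : ℕ}
    (Φ11 : Matrix (Fin n) (Fin n) ℝ) (Φ12 : Matrix (Fin n) (Fin T) ℝ)
    (Φ22 : Matrix (Fin T) (Fin T) ℝ)
    (hPD : (-Φ22).PosDef)
    (Z : Matrix (Fin n) (Fin T) ℝ)
    (hqbp : (Φ11 + Z * Φ12ᵀ + Φ12 * Zᵀ + Z * Φ22 * Zᵀ).PosSemidef)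
    (h1 : (-Φ22).IsHermitian)
    (h2 : (Φ11 - Φ12 * Φ22⁻¹ * Φ12ᵀ).IsHermitian) :
    ((Φ11 - Φ12 * Φ22⁻¹ * Φ12ᵀ) -
        (Z + Φ12 * Φ22⁻¹) * (-Φ22) * (Z + Φ12 * Φ22⁻¹)ᵀ).PosSemidef ∧
      (⨅ i, h1.eigenvalues i) * (∑ i, ∑ j, ((Z + Φ12 * Φ22⁻¹) i j) ^ 2)
        ≤ (n : ℝ) * (⨆ i, h2.eigenvalues i) := by
  have hsymm : Φ22.IsSymm := isSymm_neg_iff.mp (isHermitian_iff_isSymm.mp h1)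
  have hunit : IsUnit Φ22 := by simpa using hPD.isUnit.neg
  have hloewner := schur_sub_square_eq_quadratic Φ11 Φ12 Z hsymm hunit ▸ hqbp
  refine ⟨hloewner, ?_⟩
  set W := Z + Φ12 * Φ22⁻¹
  have htrace : (W * (-Φ22) * Wᵀ).trace ≤ (Φ11 - Φ12 * Φ22⁻¹ * Φ12ᵀ).trace := by
    have h := hloewner.trace_nonneg
    rw [trace_sub] at h
    linarith
  calc (⨅ i, h1.eigenvalues i) * ∑ i, ∑ j, W i j ^ 2
      = (⨅ i, h1.eigenvalues i) * (W * Wᵀ).trace := by rw [trace_mul_transpose_self]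
    _ ≤ (W * (-Φ22) * Wᵀ).trace := h1.iInf_eigenvalues_mul_trace_le W
    _ ≤ (Φ11 - Φ12 * Φ22⁻¹ * Φ12ᵀ).trace := htrace
    _ ≤ n * ⨆ i, h2.eigenvalues i := by
      simpa using h2.trace_le_card_mul_iSup_eigenvalues

/-- boundedness of the QBP set, Theorem 3.2b of van Waarde et al..
If `-Φ₂₂ ≻ 0` and `Z ∈ QBP(Φ)`, then
`(Z + Φ₁₂Φ₂₂⁻¹)(-Φ₂₂)(Z + Φ₁₂Φ₂₂⁻¹)ᵀ ⪯ Φ₁₁ - Φ₁₂Φ₂₂⁻¹Φ₁₂ᵀ` and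
`λ_min(-Φ₂₂)‖Z + Φ₁₂Φ₂₂⁻¹‖_F² ≤ n λ_max(Φ₁₁ - Φ₁₂Φ₂₂⁻¹Φ₁₂ᵀ)`. -/
theorem stmt4 {n T : ℕ}
    (Φ11 : Matrix (Fin n) (Fin n) ℝ) (Φ12 : Matrix (Fin n) (Fin T) ℝ)
    (Φ22 : Matrix (Fin T) (Fin T) ℝ)
    (h11 : Φ11.IsSymm) (h22 : Φ22.IsSymm) (hPD : (-Φ22).PosDef)
    (Z : Matrix (Fin n) (Fin T) ℝ)
    (hqbp : (Φ11 + Z * Φ12ᵀ + Φ12 * Zᵀ + Z * Φ22 * Zᵀ).PosSemidef)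
    (h1 : (-Φ22).IsHermitian)
    (h2 : (Φ11 - Φ12 * Φ22⁻¹ * Φ12ᵀ).IsHermitian) :
    ((Φ11 - Φ12 * Φ22⁻¹ * Φ12ᵀ) -
        (Z + Φ12 * Φ22⁻¹) * (-Φ22) * (Z + Φ12 * Φ22⁻¹)ᵀ).PosSemidef ∧
      (⨅ i, h1.eigenvalues i) * (∑ i, ∑ j, ((Z + Φ12 * Φ22⁻¹) i j) ^ 2)
        ≤ (n : ℝ) * (⨆ i, h2.eigenvalues i) :=
  stmt4_general Φ11 Φ12 Φ22 hPD Z hqbp h1 h2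
end

section
/- Let X₋, X_δ ∈ ℝ^{n×T}, U ∈ ℝ^{m×T}, Θdata ∈ ℝ^{L×T}, and let Φ ∈ S^{n+T} be symmetric with blocks Φ₁₁ ∈ S^n, Φ₁₂ ∈ ℝ^{n×T}, Φ₂₂ ∈ S^T. Let H ∈ ℝ^{(Ln+m)×T} be the matrix whose first Ln rows are the column-wise Khatri–Rao product Θdata ⊗_col X₋ (with entry at row (ℓ,i), column t equal to (Θdata)_{ℓt}(X₋)_{it}) and whose last m rows are U, let R = [I_n, X_δ; 0, −H] ∈ ℝ^{(n+Ln+m)×(n+T)}, and let Ψ = RΦRᵀ. Then for every plant given by A_1, …, A_L ∈ ℝ^{n×n} and B ∈ ℝ^{n×m}, writing Z = [A_1, …, A_L, B] ∈ ℝ^{n×(Ln+m)} and W = X_δ − Z H ∈ ℝ^{n×T}, one has the quadratic-form identity Ψ₁₁ + Z Ψ₁₂ᵀ + Ψ₁₂ Zᵀ + Z Ψ₂₂ Zᵀ = Φ₁₁ + W Φ₁₂ᵀ + Φ₁₂ Wᵀ + W Φ₂₂ Wᵀ. Consequently W ∈ QBP(Φ) if and only if Z ∈ QBP(Ψ). 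-/
/-!
Writing the quadratic form of a block matrix `Φ` at `Z` as `[I Z] Φ [I Z]ᵀ`, the identity is the
observation `[I Z] R = [I, X_δ - Z H] = [I W]`, whence `[I Z] (R Φ Rᵀ) [I Z]ᵀ = [I W] Φ [I W]ᵀ`.
The only care needed is that `Ψ` is rebuilt from its blocks as `[Ψ₁₁ Ψ₁₂; Ψ₁₂ᵀ Ψ₂₂]`, which holds
because the lower-left block of `R` vanishes and `Φ₂₂` is symmetric.
-/

open Matrix

/-- The data matrix `H ∈ ℝ^{(Ln+m)×T}`: the column-wise Khatri–Rao product
`Θdata ⊗_col X₋` stacked above `U`. -/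
def dataH {n m L T : ℕ} (Θd : Matrix (Fin L) (Fin T) ℝ)
    (Xm : Matrix (Fin n) (Fin T) ℝ) (U : Matrix (Fin m) (Fin T) ℝ) :
    Matrix (Fin L × Fin n ⊕ Fin m) (Fin T) ℝ :=
  Matrix.of fun r t => Sum.elim (fun li => Θd li.1 t * Xm li.2 t) (fun j => U j t) r

/-- The plant matrix `Z = [A₁, …, A_L, B] ∈ ℝ^{n×(Ln+m)}`. -/
def plantZ {n m L : ℕ} (A : Fin L → Matrix (Fin n) (Fin n) ℝ)
    (B : Matrix (Fin n) (Fin m) ℝ) : Matrix (Fin n) (Fin L × Fin n ⊕ Fin m) ℝ :=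
  Matrix.of fun i r => Sum.elim (fun li => A li.1 i li.2) (fun j => B i j) r

section

variable {α : Type*} [CommRing α] {l m p q : Type*}

/-- The matrix whose positive semidefiniteness defines `Z ∈ QBP(Φ)`. -/
def qbpForm [Fintype l] (Φ₁₁ : Matrix m m α) (Φ₁₂ : Matrix m l α) (Φ₂₂ : Matrix l l α)
    (Z : Matrix m l α) : Matrix m m α :=
  Φ₁₁ + Z * Φ₁₂ᵀ + Φ₁₂ * Zᵀ + Z * Φ₂₂ * Zᵀ

theorem qbpForm_eq_fromCols_mul_fromBlocks_mul [Fintype l] [Fintype m] [DecidableEq m]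
    (Φ₁₁ : Matrix m m α) (Φ₁₂ : Matrix m l α) (Φ₂₂ : Matrix l l α) (Z : Matrix m l α) :
    qbpForm Φ₁₁ Φ₁₂ Φ₂₂ Z = fromCols (1 : Matrix m m α) Z * fromBlocks Φ₁₁ Φ₁₂ Φ₁₂ᵀ Φ₂₂ *
      (fromCols (1 : Matrix m m α) Z)ᵀ := by
  rw [fromCols_mul_fromBlocks, transpose_fromCols, fromCols_mul_fromRows, transpose_one]
  simp only [qbpForm, Matrix.one_mul, Matrix.mul_one, Matrix.add_mul]
  abel

theorem fromCols_one_mul_fromBlocks_one_zero_neg [Fintype l] [Fintype m] [DecidableEq m]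
    (Z : Matrix m l α) (X : Matrix m p α) (H : Matrix l p α) :
    fromCols (1 : Matrix m m α) Z * fromBlocks (1 : Matrix m m α) X 0 (-H) =
      fromCols 1 (X - Z * H) := by
  simp only [fromCols_mul_fromBlocks, Matrix.one_mul, Matrix.mul_one, Matrix.mul_zero, add_zero,
    Matrix.mul_neg, sub_eq_add_neg]

theorem toBlocks₂₁_fromBlocks_zero_mul_mul_transpose [Fintype p] [Fintype q]
    (R₁₁ : Matrix m p α) (R₁₂ : Matrix m q α) (R₂₂ : Matrix l q α)
    (Φ₁₁ : Matrix p p α) (Φ₁₂ : Matrix p q α) {Φ₂₂ : Matrix q q α} (hΦ₂₂ : Φ₂₂.IsSymm) :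
    let Ψ := fromBlocks R₁₁ R₁₂ 0 R₂₂ * fromBlocks Φ₁₁ Φ₁₂ Φ₁₂ᵀ Φ₂₂ *
      (fromBlocks R₁₁ R₁₂ 0 R₂₂)ᵀ
    Ψ.toBlocks₂₁ = Ψ.toBlocks₁₂ᵀ := by
  simp only [fromBlocks_transpose, fromBlocks_multiply, toBlocks_fromBlocks₂₁,
    toBlocks_fromBlocks₁₂, transpose_add, transpose_mul, transpose_transpose, transpose_zero,
    hΦ₂₂.eq, Matrix.zero_mul, Matrix.mul_zero, zero_add, Matrix.mul_assoc, Matrix.mul_add]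

theorem qbpForm_fromBlocks_one_zero_neg_conj [Fintype l] [Fintype m] [Fintype p]
    [DecidableEq m] (X : Matrix m p α) (H : Matrix l p α) (Φ₁₁ : Matrix m m α) (Φ₁₂ : Matrix m p α)
    {Φ₂₂ : Matrix p p α} (hΦ₂₂ : Φ₂₂.IsSymm) (Z : Matrix m l α) :
    let R := fromBlocks (1 : Matrix m m α) X 0 (-H)
    let Ψ := R * fromBlocks Φ₁₁ Φ₁₂ Φ₁₂ᵀ Φ₂₂ * Rᵀ
    qbpForm Ψ.toBlocks₁₁ Ψ.toBlocks₁₂ Ψ.toBlocks₂₂ Z = qbpForm Φ₁₁ Φ₁₂ Φ₂₂ (X - Z * H) := by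
  intro R Ψ
  have hΨ : fromBlocks Ψ.toBlocks₁₁ Ψ.toBlocks₁₂ Ψ.toBlocks₁₂ᵀ Ψ.toBlocks₂₂ = Ψ := by
    rw [← toBlocks₂₁_fromBlocks_zero_mul_mul_transpose 1 X (-H) Φ₁₁ Φ₁₂ hΦ₂₂, fromBlocks_toBlocks]
  rw [qbpForm_eq_fromCols_mul_fromBlocks_mul, qbpForm_eq_fromCols_mul_fromBlocks_mul, hΨ,
    ← fromCols_one_mul_fromBlocks_one_zero_neg Z X H]
  simp only [Ψ, R, transpose_mul, Matrix.mul_assoc]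

end

theorem stmt8_general {n m L T : ℕ}
    (Xm Xδ : Matrix (Fin n) (Fin T) ℝ) (U : Matrix (Fin m) (Fin T) ℝ)
    (Θd : Matrix (Fin L) (Fin T) ℝ)
    (Φ11 : Matrix (Fin n) (Fin n) ℝ) (Φ12 : Matrix (Fin n) (Fin T) ℝ)
    (Φ22 : Matrix (Fin T) (Fin T) ℝ) (h22 : Φ22.IsSymm)
    (A : Fin L → Matrix (Fin n) (Fin n) ℝ) (B : Matrix (Fin n) (Fin m) ℝ) :
    let H := dataH Θd Xm U
    let R : Matrix (Fin n ⊕ (Fin L × Fin n ⊕ Fin m)) (Fin n ⊕ Fin T) ℝ :=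
      Matrix.fromBlocks 1 Xδ 0 (-H)
    let Ψ := R * Matrix.fromBlocks Φ11 Φ12 Φ12ᵀ Φ22 * Rᵀ
    let Z := plantZ A B
    let W := Xδ - Z * H
    (Ψ.toBlocks₁₁ + Z * Ψ.toBlocks₁₂ᵀ + Ψ.toBlocks₁₂ * Zᵀ + Z * Ψ.toBlocks₂₂ * Zᵀ
        = Φ11 + W * Φ12ᵀ + Φ12 * Wᵀ + W * Φ22 * Wᵀ) ∧
      ((Φ11 + W * Φ12ᵀ + Φ12 * Wᵀ + W * Φ22 * Wᵀ).PosSemidef ↔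
        (Ψ.toBlocks₁₁ + Z * Ψ.toBlocks₁₂ᵀ + Ψ.toBlocks₁₂ * Zᵀ
            + Z * Ψ.toBlocks₂₂ * Zᵀ).PosSemidef) := by
  intro H R Ψ Z W
  have hform := qbpForm_fromBlocks_one_zero_neg_conj Xδ H Φ11 Φ12 h22 Z
  exact ⟨hform, iff_of_eq (congrArg PosSemidef hform.symm)⟩

/-- QMI representation of the consistency set, Eqs. (18)–(20) of the
paper. With `R = [I, X_δ; 0, -H]` and `Ψ = RΦRᵀ`, the quadratic form of `Ψ` at the
plant `Z = [A₁,…,A_L,B]` equals the quadratic form of `Φ` at the discrepancy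
`W = X_δ - ZH`; consequently `W ∈ QBP(Φ)` iff `Z ∈ QBP(Ψ)`. -/
theorem stmt8 {n m L T : ℕ}
    (Xm Xδ : Matrix (Fin n) (Fin T) ℝ) (U : Matrix (Fin m) (Fin T) ℝ)
    (Θd : Matrix (Fin L) (Fin T) ℝ)
    (Φ11 : Matrix (Fin n) (Fin n) ℝ) (Φ12 : Matrix (Fin n) (Fin T) ℝ)
    (Φ22 : Matrix (Fin T) (Fin T) ℝ) (h11 : Φ11.IsSymm) (h22 : Φ22.IsSymm)
    (A : Fin L → Matrix (Fin n) (Fin n) ℝ) (B : Matrix (Fin n) (Fin m) ℝ) :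
    let H := dataH Θd Xm U
    let R : Matrix (Fin n ⊕ (Fin L × Fin n ⊕ Fin m)) (Fin n ⊕ Fin T) ℝ :=
      Matrix.fromBlocks 1 Xδ 0 (-H)
    let Ψ := R * Matrix.fromBlocks Φ11 Φ12 Φ12ᵀ Φ22 * Rᵀ
    let Z := plantZ A B
    let W := Xδ - Z * H
    (Ψ.toBlocks₁₁ + Z * Ψ.toBlocks₁₂ᵀ + Ψ.toBlocks₁₂ * Zᵀ + Z * Ψ.toBlocks₂₂ * Zᵀ
        = Φ11 + W * Φ12ᵀ + Φ12 * Wᵀ + W * Φ22 * Wᵀ) ∧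
      ((Φ11 + W * Φ12ᵀ + Φ12 * Wᵀ + W * Φ22 * Wᵀ).PosSemidef ↔
        (Ψ.toBlocks₁₁ + Z * Ψ.toBlocks₁₂ᵀ + Ψ.toBlocks₁₂ * Zᵀ
            + Z * Ψ.toBlocks₂₂ * Zᵀ).PosSemidef) :=
  stmt8_general Xm Xδ U Θd Φ11 Φ12 Φ22 h22 A B
end

section
/- Let P ∈ ℝ^{n×n} be symmetric positive definite, ω ∈ ℝ^L, K ∈ ℝ^{m×n}, and let M be the symmetric (n+Ln+m)×(n+Ln+m) matrix with blocks M₁₁ = P, M₂₁ = 0, M₃₁ = 0, M₂₂ = −(ωωᵀ) ⊗ P, M₃₂ = −ωᵀ ⊗ (KP) ∈ ℝ^{m×Ln}, M₃₃ = −KPKᵀ, completed symmetrically. Then for every A_1, …, A_L ∈ ℝ^{n×n} and B ∈ ℝ^{n×m}, with Z = [A_1, …, A_L, B] and A_ω := Σ_{ℓ=1}^L ω_ℓ A_ℓ, the quadratic form [I_n, Z] M [I_n, Z]ᵀ equals P − (A_ω + BK) P (A_ω + BK)ᵀ. Consequently Z ∈ SQBP(M) if and only if the 2n×2n block matrix [P,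 (A_ω + BK)P; P(A_ω + BK)ᵀ, P] is positive definite. -/
/-!
Writing `V = [ω ⊗ Iₙ; K]`, the lower-right block of `M` is `-(V P Vᵀ)`, so the quadratic form is
`P - (Z V) P (Z V)ᵀ`, and `Z V = [A₁, …, A_L] (ω ⊗ Iₙ) + B K = A_ω + B K`. The positive
definiteness criterion follows because the Schur complement of the block matrix with respect to its
`(2,2)` block `P` is `P - (A_ω + BK) P P⁻¹ P (A_ω + BK)ᵀ`, which is exactly that quadratic form.
-/

open Matrix

open scoped Kronecker ComplexOrder

section SchurComplement

variable {𝕜 m n : Type*} [RCLike 𝕜] [Fintype m] [DecidableEq m] [Fintype n] [DecidableEq n]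

theorem Matrix.posDef_fromBlocks₂₂_iff (A : Matrix m m 𝕜) (B : Matrix m n 𝕜) {D : Matrix n n 𝕜}
    (hD : D.PosDef) : (fromBlocks A B Bᴴ D).PosDef ↔ (A - B * D⁻¹ * Bᴴ).PosDef := by
  have := hD.isUnit.invertible
  -- `PosDef.fromBlocks₂₂` only gives semidefiniteness; the determinant factorization upgrades it.
  have hdet : (fromBlocks A B Bᴴ D).det = D.det * (A - B * D⁻¹ * Bᴴ).det := by
    rw [det_fromBlocks₂₂, invOf_eq_nonsing_inv]
  constructor
  · intro h
    rw [((PosDef.fromBlocks₂₂ A B hD).1 h.posSemidef).posDef_iff_det_ne_zero]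
    exact right_ne_zero_of_mul (hdet ▸ h.det_pos.ne')
  · intro h
    rw [((PosDef.fromBlocks₂₂ A B hD).2 h.posSemidef).posDef_iff_det_ne_zero, hdet]
    exact mul_ne_zero hD.det_pos.ne' h.det_pos.ne'

theorem Matrix.posDef_fromBlocks_mul_iff {P : Matrix n n 𝕜} (hP : P.PosDef) (S : Matrix n n 𝕜) :
    (fromBlocks P (S * P) (P * Sᴴ) P).PosDef ↔ (P - S * P * Sᴴ).PosDef := by
  have hSP : (S * P)ᴴ = P * Sᴴ := by rw [conjTranspose_mul, hP.isHermitian.eq]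
  have hcancel : S * P * P⁻¹ * (P * Sᴴ) = S * P * Sᴴ := by
    rw [Matrix.mul_assoc S, mul_nonsing_inv _ ((isUnit_iff_isUnit_det P).1 hP.isUnit),
      Matrix.mul_one, Matrix.mul_assoc]
  rw [← hSP, posDef_fromBlocks₂₂_iff _ _ hP, hSP, hcancel]

end SchurComplement

theorem Matrix.fromCols_one_mul_fromBlocks_mul_transpose {R m k : Type*} [CommRing R] [Fintype m]
    [DecidableEq m] [Fintype k] (Z : Matrix m k R) (P : Matrix m m R) (Q : Matrix k k R) :
    fromCols (1 : Matrix m m R) Z * fromBlocks P 0 0 Q * (fromCols (1 : Matrix m m R) Z)ᵀ =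
      P + Z * Q * Zᵀ := by
  simp [transpose_fromCols, fromCols_mul_fromBlocks, fromCols_mul_fromRows]

def kroneckerOne {R ι : Type*} [CommRing R] (ω : ι → R) (n : Type*) [DecidableEq n] :
    Matrix (ι × n) n R :=
  (replicateCol Unit ω ⊗ₖ (1 : Matrix n n R)).submatrix id fun j => ((), j)

def fromColBlocks {R ι m n : Type*} (A : ι → Matrix m n R) : Matrix m (ι × n) R :=
  of fun i p => A p.1 i p.2

section KroneckerOne

variable {R ι l m n : Type*} [CommRing R] [Fintype n] [DecidableEq n]

omit [Fintype n] in
theorem kroneckerOne_apply (ω : ι → R) (p : ι × n) (j : n) :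
    kroneckerOne ω n p j = if p.2 = j then ω p.1 else 0 := by
  simp [kroneckerOne, one_apply]

theorem fromColBlocks_mul_kroneckerOne [Fintype ι] (A : ι → Matrix m n R) (ω : ι → R) :
    fromColBlocks A * kroneckerOne ω n = ∑ ℓ, ω ℓ • A ℓ := by
  ext i j
  simp [fromColBlocks, mul_apply, kroneckerOne_apply, Fintype.sum_prod_type, Matrix.sum_apply,
    mul_comm]

theorem kroneckerOne_mul_mul_transpose (ω : ι → R) (P : Matrix n n R) :
    kroneckerOne ω n * P * (kroneckerOne ω n)ᵀ = vecMulVec ω ω ⊗ₖ P := by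
  ext p q
  simp [mul_apply, kroneckerOne_apply, vecMulVec_apply]
  ring

theorem mul_transpose_kroneckerOne (X : Matrix l n R) (ω : ι → R) :
    X * (kroneckerOne ω n)ᵀ = of fun i q => ω q.1 * X i q.2 := by
  ext i q
  simp [mul_apply, kroneckerOne_apply, mul_comm]

end KroneckerOne

theorem Matrix.fromRows_mul_mul_transpose_fromRows {R m₁ m₂ n : Type*} [CommRing R] [Fintype n]
    (U : Matrix m₁ n R) (K : Matrix m₂ n R) (P : Matrix n n R) :
    fromRows U K * P * (fromRows U K)ᵀ =
      fromBlocks (U * P * Uᵀ) (U * P * Kᵀ) (K * P * Uᵀ) (K * P * Kᵀ) := by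
  rw [transpose_fromRows, fromRows_mul, fromRows_mul_fromCols]

theorem plantZ_eq_fromCols {n m L : ℕ} (A : Fin L → Matrix (Fin n) (Fin n) ℝ)
    (B : Matrix (Fin n) (Fin m) ℝ) : plantZ A B = fromCols (fromColBlocks A) B := by
  ext i (_ | _) <;> rfl

theorem stmt10_general {n m L : ℕ}
    (P : Matrix (Fin n) (Fin n) ℝ) (hP : P.PosDef)
    (ω : Fin L → ℝ) (K : Matrix (Fin m) (Fin n) ℝ)
    (A : Fin L → Matrix (Fin n) (Fin n) ℝ) (B : Matrix (Fin n) (Fin m) ℝ) :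
    let D22 : Matrix (Fin L × Fin n) (Fin L × Fin n) ℝ :=
      Matrix.of fun p q => -(ω p.1 * ω q.1 * P p.2 q.2)
    let D32 : Matrix (Fin m) (Fin L × Fin n) ℝ :=
      Matrix.of fun i q => -(ω q.1 * (K * P) i q.2)
    let M : Matrix (Fin n ⊕ (Fin L × Fin n ⊕ Fin m))
        (Fin n ⊕ (Fin L × Fin n ⊕ Fin m)) ℝ :=
      Matrix.fromBlocks P 0 0
        (Matrix.fromBlocks D22 D32ᵀ D32 (-(K * P * Kᵀ)))
    let Z := plantZ A B
    let Aω := ∑ ℓ, ω ℓ • A ℓ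
    ((Matrix.fromCols (1 : Matrix (Fin n) (Fin n) ℝ) Z) * M * (Matrix.fromCols (1 : Matrix (Fin n) (Fin n) ℝ) Z)ᵀ
        = P - (Aω + B * K) * P * (Aω + B * K)ᵀ) ∧
      (((Matrix.fromCols (1 : Matrix (Fin n) (Fin n) ℝ) Z) * M * (Matrix.fromCols (1 : Matrix (Fin n) (Fin n) ℝ) Z)ᵀ).PosDef ↔
        (Matrix.fromBlocks P ((Aω + B * K) * P) (P * (Aω + B * K)ᵀ) P).PosDef) := by
  intro D22 D32 M Z Aω
  have hPt : Pᵀ = P := hP.isHermitian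
  set u := kroneckerOne ω (Fin n)
  have hD22 : D22 = -(u * P * uᵀ) := by
    ext p q
    simp [D22, u, kroneckerOne_mul_mul_transpose, vecMulVec_apply]
  have hD32 : D32 = -(K * P * uᵀ) := by
    rw [mul_transpose_kroneckerOne]; rfl
  have hD32T : D32ᵀ = -(u * P * Kᵀ) := by
    rw [hD32, transpose_neg, transpose_mul, transpose_mul, hPt, transpose_transpose,
      Matrix.mul_assoc]
  have hlower :
      fromBlocks D22 D32ᵀ D32 (-(K * P * Kᵀ)) = -(fromRows u K * P * (fromRows u K)ᵀ) := by
    rw [fromRows_mul_mul_transpose_fromRows, fromBlocks_neg, ← hD22, ← hD32T, ← hD32]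
  have hZ : Z = fromCols (fromColBlocks A) B := plantZ_eq_fromCols A B
  have hAω : fromColBlocks A * u = Aω := fromColBlocks_mul_kroneckerOne A ω
  have hZV : Z * fromRows u K = Aω + B * K := by
    rw [hZ, fromCols_mul_fromRows, hAω]
  have hquad : fromCols (1 : Matrix (Fin n) (Fin n) ℝ) Z * M * (fromCols 1 Z)ᵀ =
      P - (Aω + B * K) * P * (Aω + B * K)ᵀ := by
    -- the goal's outer product elaborates through `CStarMatrix`'s `HMul` instance, invisible to `rw`
    refine (fromCols_one_mul_fromBlocks_mul_transpose Z P _).trans ?_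
    rw [hlower, ← hZV, transpose_mul, Matrix.mul_neg, Matrix.neg_mul, ← sub_eq_add_neg]
    simp only [Matrix.mul_assoc]
  refine ⟨hquad, ?_⟩
  rw [← conjTranspose_eq_transpose_of_trivial (Aω + B * K), posDef_fromBlocks_mul_iff hP]
  exact iff_of_eq (congrArg PosDef hquad)

/-- discrete-time vertex stabilization QMI, Eq. (22) of the paper.
With `M` the symmetric matrix with blocks `M₁₁ = P`, `M₂₂ = -(ωωᵀ) ⊗ P`,
`M₃₂ = -ωᵀ ⊗ (KP)`, `M₃₃ = -KPKᵀ` (other blocks zero, completed symmetrically), the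
quadratic form `[I, Z] M [I, Z]ᵀ` at the plant `Z = [A₁,…,A_L,B]` equals
`P - (A_ω + BK)P(A_ω + BK)ᵀ`; consequently `Z ∈ SQBP(M)` iff
`[P, (A_ω + BK)P; P(A_ω + BK)ᵀ, P] ≻ 0`. -/
theorem stmt10 {n m L : ℕ}
    (P : Matrix (Fin n) (Fin n) ℝ) (hPs : P.IsSymm) (hP : P.PosDef)
    (ω : Fin L → ℝ) (K : Matrix (Fin m) (Fin n) ℝ)
    (A : Fin L → Matrix (Fin n) (Fin n) ℝ) (B : Matrix (Fin n) (Fin m) ℝ) :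
    let D22 : Matrix (Fin L × Fin n) (Fin L × Fin n) ℝ :=
      Matrix.of fun p q => -(ω p.1 * ω q.1 * P p.2 q.2)
    let D32 : Matrix (Fin m) (Fin L × Fin n) ℝ :=
      Matrix.of fun i q => -(ω q.1 * (K * P) i q.2)
    let M : Matrix (Fin n ⊕ (Fin L × Fin n ⊕ Fin m))
        (Fin n ⊕ (Fin L × Fin n ⊕ Fin m)) ℝ :=
      Matrix.fromBlocks P 0 0
        (Matrix.fromBlocks D22 D32ᵀ D32 (-(K * P * Kᵀ)))
    let Z := plantZ A B
    let Aω := ∑ ℓ, ω ℓ • A ℓ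
    ((Matrix.fromCols (1 : Matrix (Fin n) (Fin n) ℝ) Z) * M * (Matrix.fromCols (1 : Matrix (Fin n) (Fin n) ℝ) Z)ᵀ
        = P - (Aω + B * K) * P * (Aω + B * K)ᵀ) ∧
      (((Matrix.fromCols (1 : Matrix (Fin n) (Fin n) ℝ) Z) * M * (Matrix.fromCols (1 : Matrix (Fin n) (Fin n) ℝ) Z)ᵀ).PosDef ↔
        (Matrix.fromBlocks P ((Aω + B * K) * P) (P * (Aω + B * K)ᵀ) P).PosDef) :=
  stmt10_general P hP ω K A B
end
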